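/- For mixed birth-death/death-birth updating on the cycle with δ ∈ [0,1] and r ≥ 1, the forward bias of any non-absorbing state s with 1 < |s| < N−1 satisfies γ_s^δ ≥ 1. -/
import Mathlib


/-- Forward bias of a state on the cycle of `N` individuals with `m` mutants of fitness
`r`, under mixed birth-death/death-birth updating with mixing parameter `δ`
(DB with probability `δ`, BD with probability `1−δ`):
`γ_s^δ = [(1−δ)·r(xA+yA)/(mr+N−m) + δ·(xB + (2r/(1+r))yB)/N]
       / [(1−δ)·(xA+yA)/(mr+N−m) + δ·(xA + (2/(1+r))yA)/N]`. -/
noncomputable def gammaMix (N m : ℕ) (r δ : ℝ) (xA yA xB yB : ℕ) : ℝ :=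
  ((1 - δ) * (r * ((xA : ℝ) + yA)) / (m * r + ((N : ℝ) - m)) +
      δ * ((xB : ℝ) + (2 * r / (1 + r)) * yB) / N) /
  ((1 - δ) * ((xA : ℝ) + yA) / (m * r + ((N : ℝ) - m)) +
      δ * ((xA : ℝ) + (2 / (1 + r)) * yA) / N)


/-- For mixed BD/DB updating on the cycle with `δ ∈ [0,1]` and `r ≥ 1`, the forward bias
of any non-absorbing state with `1 < m < N−1` mutants satisfies `γ_s^δ ≥ 1`. -/
theorem mixed_bias_ge_one (N m xA yA xB yB : ℕ) (r δ : ℝ)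
    (hr : 1 ≤ r) (hδ0 : 0 ≤ δ) (hδ1 : δ ≤ 1)
    (hm1 : 1 < m) (hm2 : m < N - 1)
    (hclusters : xA + yA = xB + yB) (hcl1 : 1 ≤ xA + yA)
    (hsizeA : xA + 2 * yA ≤ m) (hsizeB : xB + 2 * yB ≤ N - m) :
    1 ≤ gammaMix N m r δ xA yA xB yB := by
  have hN4 : 4 ≤ N := by omega
  have hNpos : (0:ℝ) < N := by exact_mod_cast (by omega : 0 < N)
  have hmN : (m:ℝ) ≤ N := by exact_mod_cast (by omega : m ≤ N)
  have h1r : (0:ℝ) < 1 + r := by linarith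
  have hmr : (m:ℝ) ≤ m * r := le_mul_of_one_le_right (Nat.cast_nonneg m) hr
  have hD1 : (0:ℝ) < m * r + ((N:ℝ) - m) := by linarith
  have hs : (1:ℝ) ≤ (xA:ℝ) + yA := by exact_mod_cast hcl1
  have hsB : (xA:ℝ) + yA = (xB:ℝ) + yB := by exact_mod_cast hclusters
  -- positivity of the DB denominator term
  have h2le : 2 / (1 + r) ≤ 1 := by
    rw [div_le_one h1r]; linarith
  have h2pos : (0:ℝ) < 2 / (1 + r) := by positivity
  have hT : 0 < (xA:ℝ) + 2 / (1 + r) * yA := by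
    nlinarith [mul_nonneg (sub_nonneg.2 h2le) (Nat.cast_nonneg (α := ℝ) xA),
      mul_le_mul_of_nonneg_left hs h2pos.le]
  have hden : 0 < (1 - δ) * ((xA : ℝ) + yA) / (m * r + ((N : ℝ) - m)) +
      δ * ((xA : ℝ) + (2 / (1 + r)) * yA) / N := by
    have ha : 0 < ((xA : ℝ) + yA) / (m * r + ((N : ℝ) - m)) := by positivity
    have hb : 0 < ((xA : ℝ) + (2 / (1 + r)) * yA) / N := div_pos hT hNpos
    rw [mul_div_assoc, mul_div_assoc]
    rcases le_total (((xA : ℝ) + yA) / (m * r + ((N : ℝ) - m)))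
        (((xA : ℝ) + (2 / (1 + r)) * yA) / N) with h | h
    · nlinarith [mul_le_mul_of_nonneg_left h hδ0]
    · nlinarith [mul_le_mul_of_nonneg_left h hδ0]
  have key : (xA:ℝ) + 2 / (1 + r) * yA ≤ (xB:ℝ) + 2 * r / (1 + r) * yB := by
    rw [← sub_nonneg]
    have hxB : (xB:ℝ) = (xA:ℝ) + yA - yB := by linarith
    have heq : (xB:ℝ) + 2 * r / (1 + r) * yB - ((xA:ℝ) + 2 / (1 + r) * yA)
        = (r - 1) / (1 + r) * ((yA:ℝ) + yB) := by
      rw [hxB]; field_simp; ring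
    rw [heq]
    exact mul_nonneg (div_nonneg (by linarith) h1r.le) (by positivity)
  have hnum : (1 - δ) * ((xA : ℝ) + yA) / (m * r + ((N : ℝ) - m)) +
      δ * ((xA : ℝ) + (2 / (1 + r)) * yA) / N ≤
      (1 - δ) * (r * ((xA : ℝ) + yA)) / (m * r + ((N : ℝ) - m)) +
      δ * ((xB : ℝ) + (2 * r / (1 + r)) * yB) / N := by
    gcongr <;> first
      | linarith
      | exact le_mul_of_one_le_left (by positivity) hr
  unfold gammaMix
  rw [le_div_iff₀ hden, one_mul]
  exact hnum
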